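/- Let C_{p,q,r} be the type-III bicyclic graph with q > p > r ≥ 1 and q − r = 2 (so q − p = p − r = 1). Then W = {v_1, v_{p+2}} is a resolving set and β(C_{p,q,r}) = 2. -/

import Mathlib

/-- `W` is a resolving set for `G`: distinct vertices have distinct
distance vectors to the elements of `W`. -/
def IsResolving {V : Type*} (G : SimpleGraph V) (W : Set V) : Prop :=
  ∀ u v : V, (∀ w ∈ W, G.dist u w = G.dist v w) → u = v

/-- The metric dimension of `G`: the minimum cardinality of a resolving set. -/
noncomputable def metricDim {V : Type*} [Fintype V] (G : SimpleGraph V) : ℕ :=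
  sInf {n | ∃ W : Finset V, IsResolving G (↑W) ∧ W.card = n}

/-- The type-III base bicyclic graph `C_{p,q,r}` on vertices `v_1, …, v_{p+q+r}`
(vertex `v_i` is index `i-1`): three paths on `p`, `q`, `r` vertices, with the
extra edges `v_{p+1}v_1`, `v_{p+1}v_{p+q+1}`, `v_{p+q}v_p`, `v_{p+q}v_{p+q+r}`.
Note `C_{p,q,r} ≅ Θ_{p+1,q-1,r+1}`. -/
def bicyclicIII (p q r : ℕ) : SimpleGraph (Fin (p + q + r)) :=
  SimpleGraph.fromRel (fun a b =>
    (a.val + 1 = b.val ∧ (b.val < p ∨ (p ≤ a.val ∧ b.val < p + q) ∨ p + q ≤ a.val))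
    ∨ (a.val = p ∧ b.val = 0)
    ∨ (a.val = p ∧ b.val = p + q)
    ∨ (a.val = p + q - 1 ∧ b.val = p - 1)
    ∨ (a.val = p + q - 1 ∧ b.val = p + q + r - 1))

/-!
With `p = r + 1` and `q = r + 2`, `C_{p,q,r}` is a theta graph: three internally disjoint paths of
lengths `r + 2`, `r + 1`, `r + 1` between the branch vertices `v_{p+1}` and `v_{p+q}`. The
distances to `v_1` and to `v_{p+2}` are explicit piecewise-linear functions of the index; such a
formula is certified as the graph distance by checking that it vanishes only at the target,
changes by at most one along every edge, and drops by one along some edge at every other vertex.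
The two formulas separate all vertices. Conversely every vertex has two distinct neighbours,
which a single landmark at that vertex cannot tell apart, so no set of size at most one resolves.
-/

namespace SimpleGraph

variable {V : Type*} {G : SimpleGraph V} {f : V → ℕ} {w : V}

theorem exists_walk_length_eq_of_descent (hw : f w = 0)
    (hdesc : ∀ v, v ≠ w → ∃ u, G.Adj v u ∧ f u + 1 = f v) (v : V) :
    ∃ p : G.Walk v w, p.length = f v := by
  induction hn : f v using Nat.strong_induction_on generalizing v with
  | _ n ih =>
    by_cases hvw : v = w
    · subst hvw
      exact ⟨.nil, by simp [← hn, hw]⟩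
    · obtain ⟨u, hadj, hu⟩ := hdesc v hvw
      obtain ⟨p, hp⟩ := ih (f u) (by omega) u rfl
      exact ⟨.cons hadj p, by simp [hp, ← hn, hu]⟩

theorem le_length_of_lipschitz (hw : f w = 0) (hlip : ∀ u v, G.Adj u v → f u ≤ f v + 1)
    {v : V} (p : G.Walk v w) : f v ≤ p.length := by
  induction p with
  | nil => simp [hw]
  | cons hadj p ih =>
    have := hlip _ _ hadj
    rw [Walk.length_cons]
    omega

theorem dist_eq_of_lipschitz_of_descent (hzero : ∀ v, f v = 0 ↔ v = w)
    (hlip : ∀ u v, G.Adj u v → f u ≤ f v + 1)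
    (hdesc : ∀ v, v ≠ w → ∃ u, G.Adj v u ∧ f u + 1 = f v) (v : V) :
    G.dist v w = f v := by
  have hw : f w = 0 := (hzero w).2 rfl
  obtain ⟨p, hp⟩ := exists_walk_length_eq_of_descent hw hdesc v
  obtain ⟨q, hq⟩ := p.reachable.exists_walk_length_eq_dist
  exact le_antisymm (hp ▸ dist_le p) (hq ▸ le_length_of_lipschitz hw hlip q)

end SimpleGraph

section MetricDimension

variable {V : Type*} {G : SimpleGraph V}

theorem IsResolving.eq_of_adj_of_subset_singleton {W : Set V} {w a b : V}
    (hW : IsResolving G W) (hsub : W ⊆ {w}) (ha : G.Adj w a) (hb : G.Adj w b) : a = b :=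
  hW a b fun x hx => by
    rw [Set.mem_singleton_iff.1 (hsub hx), SimpleGraph.dist_eq_one_iff_adj.2 ha.symm,
      SimpleGraph.dist_eq_one_iff_adj.2 hb.symm]

theorem two_le_card_of_isResolving [Nonempty V]
    (hdeg : ∀ w, ∃ a b, a ≠ b ∧ G.Adj w a ∧ G.Adj w b) {W : Finset V}
    (hW : IsResolving G W) : 2 ≤ W.card := by
  by_contra! h
  obtain ⟨w, hw⟩ := Finset.card_le_one_iff_subset_singleton.1 (Nat.le_of_lt_succ h)
  obtain ⟨a, b, hab, ha, hb⟩ := hdeg w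
  exact hab (hW.eq_of_adj_of_subset_singleton (by exact_mod_cast hw) ha hb)

variable [Fintype V]

theorem metricDim_le_card {W : Finset V} (hW : IsResolving G W) : metricDim G ≤ W.card :=
  Nat.sInf_le ⟨W, hW, rfl⟩

theorem metricDim_eq_card {W : Finset V} (hW : IsResolving G W)
    (hmin : ∀ W' : Finset V, IsResolving G W' → W.card ≤ W'.card) : metricDim G = W.card := by
  refine le_antisymm (metricDim_le_card hW) ?_
  obtain ⟨W', hW', h⟩ := Nat.sInf_mem (s := {n | ∃ W : Finset V, IsResolving G W ∧ W.card = n})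
    ⟨_, W, hW, rfl⟩
  rw [metricDim, ← h]
  exact hmin W' hW'

end MetricDimension

namespace BicyclicIIIDiffTwo

/-- The edges of `C_{r+1,r+2,r}` on the indices `0, …, 3r+2`, each listed once; the branch
vertices `v_{p+1}` and `v_{p+q}` are `r + 1` and `2r + 2`. -/
def Edge (r i j : ℕ) : Prop :=
  (i + 1 = j ∧ j ≠ r + 1 ∧ j ≠ 2 * r + 3) ∨
    (i = r + 1 ∧ (j = 0 ∨ j = 2 * r + 3)) ∨ (i = 2 * r + 2 ∧ (j = r ∨ j = 3 * r + 2))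

variable {r : ℕ}

theorem edge_of_adj {a b : Fin (r + 1 + (r + 2) + r)}
    (h : (bicyclicIII (r + 1) (r + 2) r).Adj a b) : Edge r a b ∨ Edge r b a := by
  simp only [bicyclicIII, SimpleGraph.fromRel_adj] at h
  rcases h.2 with h | h
  · left; unfold Edge; omega
  · right; unfold Edge; omega

theorem adj_of_edge (hr : 1 ≤ r) {i j : ℕ} (hi : i < r + 1 + (r + 2) + r)
    (hj : j < r + 1 + (r + 2) + r) (h : Edge r i j) :
    (bicyclicIII (r + 1) (r + 2) r).Adj ⟨i, hi⟩ ⟨j, hj⟩ := by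
  simp only [bicyclicIII, SimpleGraph.fromRel_adj, ne_eq, Fin.ext_iff]
  refine ⟨by unfold Edge at h; omega, Or.inl ?_⟩
  rcases h with ⟨hij, h⟩ | ⟨rfl, rfl | rfl⟩ | ⟨rfl, rfl | rfl⟩
  · exact .inl ⟨hij, by omega⟩
  · exact .inr (.inl ⟨rfl, rfl⟩)
  · exact .inr (.inr (.inl ⟨rfl, by omega⟩))
  · exact .inr (.inr (.inr (.inl ⟨by omega, by omega⟩)))
  · exact .inr (.inr (.inr (.inr ⟨by omega, by omega⟩)))

theorem adj_of_edge_or_edge (hr : 1 ≤ r) {i j : ℕ} (hi : i < r + 1 + (r + 2) + r)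
    (hj : j < r + 1 + (r + 2) + r) (h : Edge r i j ∨ Edge r j i) :
    (bicyclicIII (r + 1) (r + 2) r).Adj ⟨i, hi⟩ ⟨j, hj⟩ :=
  h.elim (adj_of_edge hr hi hj) fun h => (adj_of_edge hr hj hi h).symm

theorem dist_eq_of_edge (hr : 1 ≤ r) {f : ℕ → ℕ} {w : ℕ} (hw : w < r + 1 + (r + 2) + r)
    (hzero : ∀ i, f i = 0 ↔ i = w)
    (hlip : ∀ i j, Edge r i j → f i ≤ f j + 1 ∧ f j ≤ f i + 1)
    (hdesc : ∀ i < r + 1 + (r + 2) + r, i ≠ w →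
      ∃ j < r + 1 + (r + 2) + r, (Edge r i j ∨ Edge r j i) ∧ f j + 1 = f i)
    (v : Fin (r + 1 + (r + 2) + r)) :
    (bicyclicIII (r + 1) (r + 2) r).dist v ⟨w, hw⟩ = f v := by
  refine SimpleGraph.dist_eq_of_lipschitz_of_descent (f := fun v : Fin (r + 1 + (r + 2) + r) => f v)
    (fun v => (hzero v).trans (Fin.ext_iff (b := ⟨w, hw⟩)).symm) (fun a b hab => ?_) (fun ⟨i, hi⟩ hne => ?_) v
  · rcases edge_of_adj hab with h | h
    exacts [(hlip _ _ h).1, (hlip _ _ h).2]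
  · obtain ⟨j, hj, hedge, hf⟩ := hdesc i hi fun h => hne (Fin.ext h)
    exact ⟨⟨j, hj⟩, adj_of_edge_or_edge hr hi hj hedge, hf⟩

def distV1 (r i : ℕ) : ℕ :=
  if i ≤ r then i
  else if i ≤ 2 * r + 2 then min (i - r) (3 * r + 3 - i)
  else i - (2 * r + 1)

def distVp2 (r i : ℕ) : ℕ :=
  if i ≤ r then min (i + 2) (2 * r + 1 - i)
  else if i ≤ 2 * r + 2 then (i - (r + 2)) + (r + 2 - i)
  else i - (2 * r + 1)

theorem dist_eq_distV1 (hr : 1 ≤ r) (v : Fin (r + 1 + (r + 2) + r)) :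
    (bicyclicIII (r + 1) (r + 2) r).dist v ⟨0, by omega⟩ = distV1 r v := by
  refine dist_eq_of_edge hr _ (fun i => ?_) (fun i j h => ?_) (fun i hi hne => ?_) v
  · unfold distV1; split_ifs <;> omega
  · unfold Edge at h; unfold distV1; split_ifs <;> omega
  · unfold Edge distV1
    rcases (by omega : i = r + 1 ∨ i = 2 * r + 2 ∨ i = 2 * r + 3 ∨
      (i ≠ r + 1 ∧ i ≠ 2 * r + 2 ∧ i ≠ 2 * r + 3)) with h | h | h | h
    · exact ⟨0, by omega, by split_ifs <;> omega⟩
    · exact ⟨r, by omega, by split_ifs <;> omega⟩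
    · exact ⟨r + 1, by omega, by split_ifs <;> omega⟩
    · exact ⟨i - 1, by omega, by split_ifs <;> omega⟩

theorem dist_eq_distVp2 (hr : 1 ≤ r) (v : Fin (r + 1 + (r + 2) + r)) :
    (bicyclicIII (r + 1) (r + 2) r).dist v ⟨r + 2, by omega⟩ = distVp2 r v := by
  refine dist_eq_of_edge hr _ (fun i => ?_) (fun i j h => ?_) (fun i hi hne => ?_) v
  · unfold distVp2; split_ifs <;> omega
  · unfold Edge at h; unfold distVp2; split_ifs <;> omega
  · unfold Edge distVp2
    rcases (by omega : i = 0 ∨ i = r ∨ i = r + 1 ∨ i = 2 * r + 3 ∨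
      (i ≠ 0 ∧ i ≠ r ∧ i ≠ r + 1 ∧ i ≠ 2 * r + 3)) with h | h | h | h | h
    · exact ⟨r + 1, by omega, by split_ifs <;> omega⟩
    · exact ⟨2 * r + 2, by omega, by split_ifs <;> omega⟩
    · exact ⟨r + 2, by omega, by split_ifs <;> omega⟩
    · exact ⟨r + 1, by omega, by split_ifs <;> omega⟩
    · exact ⟨i - 1, by omega, by split_ifs <;> omega⟩

theorem eq_of_distV1_eq_of_distVp2_eq {i j : ℕ} (hi : i < r + 1 + (r + 2) + r)
    (hj : j < r + 1 + (r + 2) + r) (h₁ : distV1 r i = distV1 r j)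
    (h₂ : distVp2 r i = distVp2 r j) : i = j := by
  unfold distV1 at h₁
  unfold distVp2 at h₂
  split_ifs at h₁ h₂ <;> omega

theorem exists_two_edges (hr : 1 ≤ r) {i : ℕ} (hi : i < r + 1 + (r + 2) + r) :
    ∃ j < r + 1 + (r + 2) + r, ∃ k < r + 1 + (r + 2) + r,
      j ≠ k ∧ (Edge r i j ∨ Edge r j i) ∧ (Edge r i k ∨ Edge r k i) := by
  unfold Edge
  rcases (by omega : i = 0 ∨ i = r ∨ i = r + 1 ∨ i = 2 * r + 2 ∨ (i = 2 * r + 3 ∧ r = 1) ∨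
      (i = 2 * r + 3 ∧ 2 ≤ r) ∨ (i = 3 * r + 2 ∧ 2 ≤ r) ∨
      (i ≠ 0 ∧ i ≠ r ∧ i ≠ r + 1 ∧ i ≠ 2 * r + 2 ∧ i ≠ 2 * r + 3 ∧ i ≠ 3 * r + 2))
    with h | h | h | h | h | h | h | h
  · exact ⟨1, by omega, r + 1, by omega, by omega⟩
  · exact ⟨r - 1, by omega, 2 * r + 2, by omega, by omega⟩
  · exact ⟨0, by omega, r + 2, by omega, by omega⟩
  · exact ⟨r, by omega, 2 * r + 1, by omega, by omega⟩
  · exact ⟨r + 1, by omega, 2 * r + 2, by omega, by omega⟩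
  · exact ⟨r + 1, by omega, i + 1, by omega, by omega⟩
  · exact ⟨2 * r + 2, by omega, i - 1, by omega, by omega⟩
  · exact ⟨i - 1, by omega, i + 1, by omega, by omega⟩

theorem isResolving_pair (hr : 1 ≤ r) :
    IsResolving (bicyclicIII (r + 1) (r + 2) r) {⟨0, by omega⟩, ⟨r + 2, by omega⟩} := by
  intro u v h
  have h₁ := h _ (Set.mem_insert _ _)
  have h₂ := h _ (Set.mem_insert_of_mem _ rfl)
  rw [dist_eq_distV1 hr, dist_eq_distV1 hr] at h₁
  rw [dist_eq_distVp2 hr, dist_eq_distVp2 hr] at h₂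
  exact Fin.ext (eq_of_distV1_eq_of_distVp2_eq u.2 v.2 h₁ h₂)

theorem exists_adj_ne (hr : 1 ≤ r) (v : Fin (r + 1 + (r + 2) + r)) :
    ∃ a b, a ≠ b ∧ (bicyclicIII (r + 1) (r + 2) r).Adj v a ∧
      (bicyclicIII (r + 1) (r + 2) r).Adj v b := by
  obtain ⟨j, hj, k, hk, hjk, hvj, hvk⟩ := exists_two_edges hr v.2
  exact ⟨⟨j, hj⟩, ⟨k, hk⟩, fun h => hjk (congrArg Fin.val h),
    adj_of_edge_or_edge hr v.2 hj hvj, adj_of_edge_or_edge hr v.2 hk hvk⟩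

end BicyclicIIIDiffTwo

theorem bicyclicIII_q_gt_p_gt_r_diff_two (p q r : ℕ)
    (hr : 1 ≤ r) (hpr : r < p) (hpq : p < q) (hq : q = r + 2) :
    IsResolving (bicyclicIII p q r)
      {(⟨0, by omega⟩ : Fin (p + q + r)), ⟨p + 1, by omega⟩}
    ∧ metricDim (bicyclicIII p q r) = 2 := by
  obtain rfl : p = r + 1 := by omega
  subst hq
  have hres := BicyclicIIIDiffTwo.isResolving_pair hr
  refine ⟨hres, ?_⟩
  let W : Finset (Fin (r + 1 + (r + 2) + r)) := {⟨0, by omega⟩, ⟨r + 2, by omega⟩}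
  have hW : IsResolving (bicyclicIII (r + 1) (r + 2) r) W := by rwa [Finset.coe_pair]
  have hcard : W.card = 2 := Finset.card_pair (by simp [Fin.ext_iff])
  have : Nonempty (Fin (r + 1 + (r + 2) + r)) := ⟨⟨0, by omega⟩⟩
  refine (metricDim_eq_card hW fun W' hW' => ?_).trans hcard
  exact hcard.trans_le (two_le_card_of_isResolving (BicyclicIIIDiffTwo.exists_adj_ne hr) hW')
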